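/- Let L and L' be subgroups (lattices) of ℤ^r. Then L ⊆ L' if and only if every binomial x^(m⁺) - x^(m⁻) with m ∈ L lies in the ideal generated by binomials from L'. Equivalently, for lattice ideals: L ⊆ L' if and only if I_L ⊆ I_{L'}. -/

import Mathlib

open MvPolynomial

/-- The lattice ideal `I_L` associated to a lattice (subgroup) `L ⊆ ℤ^r`:
the ideal generated by the binomials `x^(m⁺) - x^(m⁻)` for `m ∈ L`. -/
noncomputable def latticeIdeal (K : Type*) [CommRing K] {r : ℕ}
    (L : AddSubgroup (Fin r → ℤ)) : Ideal (MvPolynomial (Fin r) K) :=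
  Ideal.span { f | ∃ m ∈ L,
    f = monomial (Finsupp.equivFunOnFinite.symm fun i => (m i).toNat) (1 : K)
      - monomial (Finsupp.equivFunOnFinite.symm fun i => (-(m i)).toNat) (1 : K) }

/-- Coordinatewise coercion `(Fin r →₀ ℕ) →+ (Fin r → ℤ)`. -/
def coordCast (r : ℕ) : (Fin r →₀ ℕ) →+ (Fin r → ℤ) where
  toFun a := fun i => (a i : ℤ)
  map_zero' := by ext i; simp
  map_add' a b := by ext i; simp

lemma coordCast_sub {r : ℕ} (m : Fin r → ℤ) :
    coordCast r (Finsupp.equivFunOnFinite.symm fun i => (m i).toNat)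
      - coordCast r (Finsupp.equivFunOnFinite.symm fun i => (-(m i)).toNat) = m := by
  funext i
  simp only [coordCast, AddMonoidHom.coe_mk, ZeroHom.coe_mk, Pi.sub_apply,
    Finsupp.coe_equivFunOnFinite_symm]
  omega

/-- `L ⊆ L'` if and only if `I_L ⊆ I_{L'}`. -/
theorem lattice_le_iff_latticeIdeal_le (K : Type*) [Field K] {r : ℕ}
    (L L' : AddSubgroup (Fin r → ℤ)) :
    L ≤ L' ↔ latticeIdeal K L ≤ latticeIdeal K L' := by
  constructor
  · intro h
    apply Ideal.span_mono
    rintro f ⟨m, hm, rfl⟩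
    exact ⟨m, h hm, rfl⟩
  · intro h m hm
    set ψ : (Fin r →₀ ℕ) →+ ((Fin r → ℤ) ⧸ L') :=
      (QuotientAddGroup.mk' L').comp (coordCast r) with hψ
    set F : MvPolynomial (Fin r) K →+* AddMonoidAlgebra K ((Fin r → ℤ) ⧸ L') :=
      AddMonoidAlgebra.mapDomainRingHom K ψ with hF
    have hmono : ∀ d : Fin r →₀ ℕ, F (monomial d (1 : K)) = AddMonoidAlgebra.single (ψ d) 1 := by
      intro d
      rw [← MvPolynomial.single_eq_monomial]
      simp only [hF, AddMonoidAlgebra.mapDomainRingHom_apply]; exact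
        AddMonoidAlgebra.mapDomain_single (f := ⇑ψ) (a := d) (r := (1 : K))
    have key : ∀ n : Fin r → ℤ, ψ (Finsupp.equivFunOnFinite.symm fun i => (n i).toNat)
        = ψ (Finsupp.equivFunOnFinite.symm fun i => (-(n i)).toNat) ↔ n ∈ L' := by
      intro n
      rw [hψ]
      simp only [AddMonoidHom.comp_apply, QuotientAddGroup.mk'_apply]
      rw [QuotientAddGroup.eq_iff_sub_mem, coordCast_sub]
    have hker : latticeIdeal K L' ≤ RingHom.ker F := by
      rw [latticeIdeal, Ideal.span_le]
      rintro f ⟨n, hn, rfl⟩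
      simp only [SetLike.mem_coe, RingHom.mem_ker, map_sub, hmono]
      rw [(key n).2 hn, sub_self]
    have hgen : (monomial (Finsupp.equivFunOnFinite.symm fun i => (m i).toNat) (1 : K)
        - monomial (Finsupp.equivFunOnFinite.symm fun i => (-(m i)).toNat) (1 : K))
        ∈ latticeIdeal K L := Ideal.subset_span ⟨m, hm, rfl⟩
    have h0 : F (monomial (Finsupp.equivFunOnFinite.symm fun i => (m i).toNat) (1 : K)
        - monomial (Finsupp.equivFunOnFinite.symm fun i => (-(m i)).toNat) (1 : K)) = 0 :=
      hker (h hgen)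
    rw [map_sub, hmono, hmono, sub_eq_zero] at h0
    have := AddMonoidAlgebra.single_inj.1 h0
    rcases this with ⟨he, -⟩ | ⟨h1, -⟩
    · exact (key m).1 he
    · exact absurd h1 one_ne_zero
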